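/- Let T = (T_1,...,T_d) be a commuting tuple of bounded operators on a Hilbert space H that is a joint (m;(q_1,...,q_d))-partial isometry with ker(T^q) reducing each T_j. If λ = (λ_1,...,λ_d) is a joint approximate eigenvalue of T (i.e., there is a sequence of unit vectors x_n with (T_j − λ_j)x_n → 0 for all j), then either λ_1 λ_2 ⋯ λ_d = 0 or Σ_{j=1}^d |λ_j|² = 1. -/

import Mathlib

/-!
Let `K = ker T^q` and let `P` be the orthogonal projection onto `K`. Since `K` reduces every
`T_j`, `P` commutes with `T^q`; if `λ_1 ⋯ λ_d ≠ 0` then `μ = λ^q ≠ 0`, and applying `P` to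
`T^q x_n - μ x_n → 0` gives `μ P x_n → 0`, so `P x_n → 0`.

The hypothesis says `T^q D = 0` for `D = Σ_k (-1)^k C(m,k) Σ_{|α|=k} (k!/α!) T^{*α} T^α`, so `D`
maps into `K` and `⟪x_n, D x_n⟫ = ⟪P x_n, D x_n⟫ → 0`. On the other hand, commutativity gives
`T^{*α} = (T^α)*`, so `⟪x_n, T^{*α} T^α x_n⟫ = ‖T^α x_n‖² → |λ^α|²`, and by the multinomial and
binomial theorems `⟪x_n, D x_n⟫ → (1 - Σ_j |λ_j|²)^m`. Hence `(1 - Σ_j |λ_j|²)^m = 0`, and `m ≠ 0`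
because for `m = 0` this limit is `1`.
-/

open Finset ContinuousLinearMap Filter

variable {H : Type*} [NormedAddCommGroup H] [InnerProductSpace ℂ H] [CompleteSpace H]

/-- `opPow T α = T 0 ^ α 0 * ⋯ * T (d-1) ^ α (d-1)`. -/
noncomputable def opPow {d : ℕ} (T : Fin d → H →L[ℂ] H) (α : Fin d → ℕ) : H →L[ℂ] H :=
  (List.ofFn fun j => (T j) ^ (α j)).prod

/-- The operator `T^q * Σ_{k=0}^m (-1)^k C(m,k) Σ_{|α|=k} (k!/α!) T^{*α} T^α`; the tuple `T`
is a joint `(m;(q_1,…,q_d))`-partial isometry iff this operator vanishes. -/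
noncomputable def jpiOp {d : ℕ} (m : ℕ) (q : Fin d → ℕ) (T : Fin d → H →L[ℂ] H) :
    H →L[ℂ] H :=
  opPow T q *
    ∑ k ∈ Finset.range (m + 1), ((-1 : ℂ) ^ k * (m.choose k : ℂ)) •
      ∑ α ∈ Finset.Nat.antidiagonalTuple d k,
        (Nat.multinomial Finset.univ α : ℂ) •
          (opPow (fun j => ContinuousLinearMap.adjoint (T j)) α * opPow T α)

open scoped InnerProductSpace Topology

section ApproxEigen

variable {𝕜 E : Type*} [NormedField 𝕜] [NormedAddCommGroup E] [NormedSpace 𝕜 E]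

def IsApproxEigenseq (A : E →L[𝕜] E) (a : 𝕜) (x : ℕ → E) : Prop :=
  Tendsto (fun n => A (x n) - a • x n) atTop (𝓝 0)

namespace IsApproxEigenseq

variable {A B : E →L[𝕜] E} {a b : 𝕜} {x : ℕ → E}

lemma iff_tendsto_norm :
    IsApproxEigenseq A a x ↔ Tendsto (fun n => ‖A (x n) - a • x n‖) atTop (𝓝 0) :=
  tendsto_zero_iff_norm_tendsto_zero

lemma one : IsApproxEigenseq (1 : E →L[𝕜] E) 1 x := by
  simp [IsApproxEigenseq]

lemma mul (hA : IsApproxEigenseq A a x) (hB : IsApproxEigenseq B b x) :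
    IsApproxEigenseq (A * B) (a * b) x := by
  have h : Tendsto (fun n => A (B (x n) - b • x n) + b • (A (x n) - a • x n)) atTop (𝓝 0) := by
    simpa using ((A.continuous.tendsto 0).comp hB).add (hA.const_smul b)
  refine h.congr fun n => ?_
  simp only [map_sub, map_smul, smul_sub, smul_smul, mul_apply_eq_comp, mul_comm b a]
  abel

lemma pow (hA : IsApproxEigenseq A a x) (k : ℕ) : IsApproxEigenseq (A ^ k) (a ^ k) x := by
  induction k with
  | zero => simpa using one
  | succ k ih => simpa only [pow_succ] using ih.mul hA

lemma tendsto_norm_apply (hA : IsApproxEigenseq A a x) (hx : ∀ n, ‖x n‖ = 1) :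
    Tendsto (fun n => ‖A (x n)‖) atTop (𝓝 ‖a‖) := by
  refine tendsto_iff_norm_sub_tendsto_zero.mpr <|
    squeeze_zero (fun _ => norm_nonneg _) (fun n => ?_) (iff_tendsto_norm.mp hA)
  simpa [norm_smul, hx n] using abs_norm_sub_norm_le (A (x n)) (a • x n)

end IsApproxEigenseq

end ApproxEigen

section Projection

variable {𝕜 E : Type*} [RCLike 𝕜] [NormedAddCommGroup E] [InnerProductSpace 𝕜 E]

lemma commute_starProjection_of_mapsTo [CompleteSpace E] {A : E →L[𝕜] E} {K : Submodule 𝕜 E}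
    [K.HasOrthogonalProjection] (hA : ∀ x ∈ K, A x ∈ K) (hA' : ∀ x ∈ K, adjoint A x ∈ K) :
    Commute K.starProjection A := by
  rw [ContinuousLinearMap.IsIdempotentElem.commute_iff K.isIdempotentElem_starProjection,
    K.range_starProjection, K.ker_starProjection]
  exact ⟨(Module.End.mem_invtSubmodule_iff_forall_mem_of_mem _).mpr hA,
    orthogonal_mem_invtSubmodule ((Module.End.mem_invtSubmodule_iff_forall_mem_of_mem _).mpr hA')⟩

lemma IsApproxEigenseq.tendsto_starProjection_ker {A : E →L[𝕜] E} {a : 𝕜} {x : ℕ → E}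
    [A.ker.HasOrthogonalProjection] (hx : IsApproxEigenseq A a x) (ha : a ≠ 0)
    (hA : Commute A.ker.starProjection A) :
    Tendsto (fun n => A.ker.starProjection (x n)) atTop (𝓝 0) := by
  set P := A.ker.starProjection
  have hAP : ∀ n, P (A (x n) - a • x n) = -a • P (x n) := fun n => by
    have hPx : A (P (x n)) = 0 := A.ker.starProjection_apply_mem (x n)
    rw [map_sub, map_smul, ← mul_apply_eq_comp P A, hA.eq, mul_apply_eq_comp, hPx, zero_sub,
      neg_smul]
  have h := ((P.continuous.tendsto' 0 0 (map_zero P)).comp hx).congr hAP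
  simpa [smul_smul, ha] using h.const_smul (-a)⁻¹

lemma tendsto_inner_of_tendsto_starProjection {K : Submodule 𝕜 E} [K.HasOrthogonalProjection]
    {D : E →L[𝕜] E} (hD : ∀ y, D y ∈ K) {x : ℕ → E} (hx : ∀ n, ‖x n‖ ≤ 1)
    (hP : Tendsto (fun n => K.starProjection (x n)) atTop (𝓝 0)) :
    Tendsto (fun n => ⟪x n, D (x n)⟫_𝕜) atTop (𝓝 0) := by
  have hbound : ∀ n, ‖⟪x n, D (x n)⟫_𝕜‖ ≤ ‖K.starProjection (x n)‖ * ‖D‖ := fun n => calc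
    ‖⟪x n, D (x n)⟫_𝕜‖ = ‖⟪K.starProjection (x n), D (x n)⟫_𝕜‖ := by
      rw [K.inner_starProjection_left_eq_right, Submodule.starProjection_eq_self_iff.mpr (hD _)]
    _ ≤ ‖K.starProjection (x n)‖ * ‖D (x n)‖ := norm_inner_le_norm _ _
    _ ≤ ‖K.starProjection (x n)‖ * ‖D‖ := by
      gcongr; exact D.le_of_opNorm_le_of_le le_rfl (hx n) |>.trans_eq (mul_one _)
  exact squeeze_zero_norm hbound (by simpa using hP.norm.mul_const ‖D‖)

end Projection

section OpPow

variable {E : Type*} [NormedAddCommGroup E] [InnerProductSpace ℂ E] {d : ℕ}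

lemma opPow_succ (T : Fin (d + 1) → E →L[ℂ] E) (α : Fin (d + 1) → ℕ) :
    opPow T α = T 0 ^ α 0 * opPow (fun j => T j.succ) (fun j => α j.succ) := by
  simp [opPow, List.ofFn_succ]

lemma Commute.opPow_right {A : E →L[ℂ] E} {T : Fin d → E →L[ℂ] E} (h : ∀ j, Commute A (T j))
    (α : Fin d → ℕ) : Commute A (opPow T α) := by
  induction d with
  | zero => exact Commute.one_right A
  | succ d ih => rw [opPow_succ]; exact ((h 0).pow_right _).mul_right (ih (fun j => h j.succ) _)

lemma adjoint_opPow {T : Fin d → H →L[ℂ] H} (hT : ∀ i j, Commute (T i) (T j)) (α : Fin d → ℕ) :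
    adjoint (opPow T α) = opPow (fun j => adjoint (T j)) α := by
  induction d with
  | zero => exact adjoint_one
  | succ d ih =>
    have hcomm : Commute (T 0 ^ α 0) (opPow (fun j => T j.succ) (fun j => α j.succ)) :=
      Commute.opPow_right (fun j => (hT 0 j.succ).pow_left _) _
    rw [opPow_succ, opPow_succ, ← star_eq_adjoint, star_mul, ← hcomm.star_star.eq, star_pow,
      star_eq_adjoint, star_eq_adjoint, ih fun i j => hT i.succ j.succ]

lemma IsApproxEigenseq.opPow {T : Fin d → E →L[ℂ] E} {lam : Fin d → ℂ} {x : ℕ → E}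
    (h : ∀ j, IsApproxEigenseq (T j) (lam j) x) (α : Fin d → ℕ) :
    IsApproxEigenseq (opPow T α) (∏ j, lam j ^ α j) x := by
  induction d with
  | zero => exact one
  | succ d ih =>
    rw [opPow_succ, Fin.prod_univ_succ]
    exact ((h 0).pow _).mul (ih (fun j => h j.succ) _)

end OpPow

lemma one_sub_sum_pow_eq_sum_antidiagonalTuple {R : Type*} [CommRing R] {d : ℕ} (m : ℕ)
    (c : Fin d → R) :
    (1 - ∑ j, c j) ^ m = ∑ k ∈ range (m + 1), (-1) ^ k * (m.choose k : R) *
      ∑ α ∈ Nat.antidiagonalTuple d k, (Nat.multinomial univ α : R) * ∏ j, c j ^ α j := by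
  rw [sub_eq_neg_add, add_pow]
  refine sum_congr rfl fun k _ => ?_
  rw [← piAntidiag_univ_fin_eq_antidiagonalTuple, ← sum_pow_eq_sum_piAntidiag, one_pow, mul_one,
    neg_pow]
  ring

section Defect

variable {d : ℕ}

noncomputable def jpiDefect (m : ℕ) (T : Fin d → H →L[ℂ] H) : H →L[ℂ] H :=
  ∑ k ∈ range (m + 1), ((-1 : ℂ) ^ k * (m.choose k : ℂ)) •
    ∑ α ∈ Nat.antidiagonalTuple d k,
      (Nat.multinomial univ α : ℂ) • (opPow (fun j => adjoint (T j)) α * opPow T α)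

lemma jpiOp_eq_opPow_mul_jpiDefect (m : ℕ) (q : Fin d → ℕ) (T : Fin d → H →L[ℂ] H) :
    jpiOp m q T = opPow T q * jpiDefect m T :=
  rfl

lemma inner_jpiDefect {T : Fin d → H →L[ℂ] H} (hT : ∀ i j, Commute (T i) (T j)) (m : ℕ) (x : H) :
    ⟪x, jpiDefect m T x⟫_ℂ = ∑ k ∈ range (m + 1), (-1) ^ k * (m.choose k : ℂ) *
      ∑ α ∈ Nat.antidiagonalTuple d k, (Nat.multinomial univ α : ℂ) * (‖opPow T α x‖ : ℂ) ^ 2 := by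
  simp only [jpiDefect, _root_.sum_apply, smul_apply, inner_sum, inner_smul_right,
    mul_apply_eq_comp, ← adjoint_opPow hT, adjoint_inner_right, inner_self_eq_norm_sq_to_K,
    RCLike.ofReal_eq_complex_ofReal]

lemma tendsto_inner_jpiDefect {T : Fin d → H →L[ℂ] H} (hT : ∀ i j, Commute (T i) (T j))
    (m : ℕ) {lam : Fin d → ℂ} {x : ℕ → H} (hx : ∀ n, ‖x n‖ = 1)
    (h : ∀ j, IsApproxEigenseq (T j) (lam j) x) :
    Tendsto (fun n => ⟪x n, jpiDefect m T (x n)⟫_ℂ) atTop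
      (𝓝 ((1 - ∑ j, (‖lam j‖ : ℂ) ^ 2) ^ m)) := by
  simp_rw [inner_jpiDefect hT, one_sub_sum_pow_eq_sum_antidiagonalTuple]
  refine tendsto_finsetSum _ fun k _ => (tendsto_finsetSum _ fun α _ => ?_).const_mul _
  refine Tendsto.const_mul _ ?_
  have hα := ((Complex.continuous_ofReal.tendsto _).comp
    ((IsApproxEigenseq.opPow h α).tendsto_norm_apply hx)).pow 2
  have hlim : ((‖∏ j, lam j ^ α j‖ : ℝ) : ℂ) ^ 2 = ∏ j, ((‖lam j‖ : ℂ) ^ 2) ^ α j := by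
    rw [norm_prod, Complex.ofReal_prod, ← prod_pow]
    refine prod_congr rfl fun j _ => ?_
    rw [norm_pow, Complex.ofReal_pow, ← pow_mul, ← pow_mul, mul_comm]
  rw [hlim] at hα
  exact hα

end Defect

theorem jpi_approx_spectrum {d m : ℕ} (q : Fin d → ℕ) (T : Fin d → H →L[ℂ] H)
    (hcomm : ∀ i j, Commute (T i) (T j)) (hT : jpiOp m q T = 0)
    (hred : ∀ (j : Fin d) (x : H), opPow T q x = 0 →
      opPow T q (T j x) = 0 ∧ opPow T q (ContinuousLinearMap.adjoint (T j) x) = 0)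
    (lam : Fin d → ℂ) (x : ℕ → H) (hx : ∀ n, ‖x n‖ = 1)
    (htend : ∀ j, Filter.Tendsto (fun n => ‖T j (x n) - lam j • x n‖)
      Filter.atTop (nhds 0)) :
    (∏ j, lam j) = 0 ∨ ∑ j, ‖lam j‖ ^ 2 = (1 : ℝ) := by
  refine or_iff_not_imp_left.mpr fun hprod => ?_
  have happrox : ∀ j, IsApproxEigenseq (T j) (lam j) x :=
    fun j => IsApproxEigenseq.iff_tendsto_norm.mpr (htend j)
  have hμ : ∏ j, lam j ^ q j ≠ 0 :=
    prod_ne_zero_iff.mpr fun j _ => pow_ne_zero _ (prod_ne_zero_iff.mp hprod j (mem_univ j))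
  have hP : Commute (opPow T q).ker.starProjection (opPow T q) := Commute.opPow_right
    (fun j => commute_starProjection_of_mapsTo (fun y hy => (hred j y hy).1)
      (fun y hy => (hred j y hy).2)) q
  have hD : ∀ y, jpiDefect m T y ∈ (opPow T q).ker := fun y => by
    simpa [jpiOp_eq_opPow_mul_jpiDefect, mul_apply_eq_comp] using congrArg (· y) hT
  have h0 := tendsto_inner_of_tendsto_starProjection hD (fun n => (hx n).le)
    ((IsApproxEigenseq.opPow happrox q).tendsto_starProjection_ker hμ hP)
  have hs := tendsto_nhds_unique (tendsto_inner_jpiDefect hcomm m hx happrox) h0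
  have hm : m ≠ 0 := by rintro rfl; simp at hs
  exact_mod_cast (sub_eq_zero.mp (pow_eq_zero_iff hm |>.mp hs)).symm
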